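/- arXiv:1012.2802 — 4 statements merged into one kernel-verified Lean document; each statement's English description precedes it below -/
import Mathlib

section
/- For each p ∈ {0,…,n−1}, the inversion formula h_p = (1/n) · Σ_{t=0}^{n−1} ξ^{t(p+r)} g_t holds in the polynomial ring ℂ[x_1,…,x_r]. -/
open MvPolynomial

/-- Gornik's generator `g_t = ∏_{k=1}^r ∑_{a=0}^{n-1} ξ^{-t(a+1)} x_k^a`
in the polynomial ring `ℂ[x_1, …, x_r]`. -/
noncomputable def gornik (n r : ℕ) (ξ : ℂ) (t : ℤ) : MvPolynomial (Fin r) ℂ :=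
  ∏ k : Fin r, ∑ a ∈ Finset.range n, C (ξ ^ (-(t * ((a : ℤ) + 1)))) * X k ^ a

/-- The `n`-degree-`p` component of `f ∈ ℂ[x_1,…,x_r]`: the sum of those terms of `f`
whose monomial has total degree congruent to `p` modulo `n`. -/
noncomputable def ncomp (n : ℕ) {r : ℕ} (p : ℕ) (f : MvPolynomial (Fin r) ℂ) :
    MvPolynomial (Fin r) ℂ :=
  ∑ m ∈ f.support.filter (fun m => (∑ k : Fin r, m k) % n = p % n),
    monomial m (f.coeff m)

/-!
Compare coefficients. The generator `g_t` has coefficient `ξ^{-t(|m|+r)}` at each monomial `x^m`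
with all exponents below `n` and none elsewhere, so the right-hand side has coefficient
`n⁻¹ ∑_t ξ^{t(p-|m|)}` there. By orthogonality of the `n`-th roots of unity this is `1` when
`|m| ≡ p [MOD n]` and `0` otherwise, which is the coefficient of `h_p`.
-/

open Finset

theorem IsPrimitiveRoot.sum_zpow_mul {K : Type*} [Field K] {ζ : K} {n : ℕ}
    (hζ : IsPrimitiveRoot ζ n) (d : ℤ) :
    ∑ t ∈ range n, ζ ^ ((t : ℤ) * d) = if (n : ℤ) ∣ d then (n : K) else 0 := by
  simp_rw [mul_comm _ d, zpow_mul, zpow_natCast]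
  split_ifs with hd
  · simp [(hζ.zpow_eq_one_iff_dvd d).2 hd]
  · have hζd : (ζ ^ d) ^ n = 1 := by
      rw [← zpow_natCast, ← zpow_mul, mul_comm, zpow_mul, zpow_natCast, hζ.pow_eq_one, one_zpow]
    rw [geom_sum_eq (mt (hζ.zpow_eq_one_iff_dvd d).1 hd), hζd, sub_self, zero_div]

theorem MvPolynomial.coeff_prod_sum_C_mul_X_pow {R σ : Type*} [CommSemiring R] [Fintype σ]
    (n : ℕ) (c : ℕ → R) (m : σ →₀ ℕ) :
    coeff m (∏ k, ∑ a ∈ range n, C (c a) * X k ^ a)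
      = if ∀ k, m k < n then ∏ k, c (m k) else 0 := by
  classical
  have hterm : ∀ g : σ → ℕ, ∏ k, C (c (g k)) * X k ^ g k
      = monomial (Finsupp.equivFunOnFinite.symm g) (∏ k, c (g k)) := by
    intro g
    rw [monomial_eq, Finsupp.prod_fintype _ _ (by simp), Finset.prod_mul_distrib, map_prod]
    simp
  rw [prod_univ_sum, Finset.sum_congr rfl fun g _ => hterm g, coeff_sum]
  simp only [coeff_monomial, Equiv.symm_apply_eq]
  rw [Finset.sum_ite_eq']
  simp [Fintype.mem_piFinset]

theorem coeff_gornik (n r : ℕ) (ξ : ℂ) (t : ℤ) (m : Fin r →₀ ℕ) :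
    coeff m (gornik n r ξ t) = if ∀ k, m k < n then (ξ ^ (-t)) ^ (∑ k, m k + r) else 0 := by
  have h : ∀ a : ℕ, ξ ^ (-(t * ((a : ℤ) + 1))) = (ξ ^ (-t)) ^ (a + 1) := fun a => by
    rw [← zpow_natCast, ← zpow_mul]; push_cast; ring_nf
  simp only [gornik, h, coeff_prod_sum_C_mul_X_pow, prod_pow_eq_pow_sum, sum_add_distrib,
    sum_const, card_univ, Fintype.card_fin, smul_eq_mul, mul_one]

theorem coeff_ncomp (n : ℕ) {r : ℕ} (p : ℕ) (f : MvPolynomial (Fin r) ℂ) (m : Fin r →₀ ℕ) :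
    coeff m (ncomp n p f) = if (∑ k, m k) ≡ p [MOD n] then coeff m f else 0 := by
  classical
  rw [ncomp, coeff_sum]
  simp only [coeff_monomial, sum_ite_eq', mem_filter, mem_support_iff]
  unfold Nat.ModEq
  split_ifs <;> simp_all

theorem ncomp_inversion_general (n r : ℕ) (hn : 2 ≤ n) (ξ : ℂ)
    (hξ : ξ = Complex.exp (2 * Real.pi * Complex.I / n)) (p : ℕ) :
    ncomp n p (gornik n r ξ 0)
        = C ((n : ℂ)⁻¹) *
            ∑ t ∈ Finset.range n,
              C (ξ ^ ((t : ℤ) * ((p : ℤ) + (r : ℤ)))) * gornik n r ξ (t : ℤ) := by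
  have hn0 : n ≠ 0 := by omega
  have hprim : IsPrimitiveRoot ξ n := hξ ▸ Complex.isPrimitiveRoot_exp n hn0
  ext m
  simp only [coeff_ncomp, coeff_C_mul, coeff_sum, coeff_gornik]
  by_cases hm : ∀ k, m k < n
  · have hpow : ∀ t : ℕ, ξ ^ ((t : ℤ) * (p + r)) * (ξ ^ (-(t : ℤ))) ^ (∑ k, m k + r)
        = ξ ^ ((t : ℤ) * ((p : ℤ) - (∑ k, m k : ℕ))) := fun t => by
      rw [← zpow_natCast, ← zpow_mul, ← zpow_add₀ (hprim.ne_zero hn0)]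
      push_cast; ring_nf
    simp only [if_pos hm, sum_congr rfl fun t _ => hpow t,
      hprim.sum_zpow_mul, ← Nat.modEq_iff_dvd]
    split_ifs <;> simp [hn0]
  · simp [hm]

/-- Inversion formula: `h_p = (1/n) ∑_{t=0}^{n-1} ξ^{t(p+r)} g_t`. -/
theorem ncomp_inversion (n r : ℕ) (hn : 2 ≤ n) (hr : 1 ≤ r) (ξ : ℂ)
    (hξ : ξ = Complex.exp (2 * Real.pi * Complex.I / n)) (p : ℕ) (hp : p < n) :
    ncomp n p (gornik n r ξ 0)
        = C ((n : ℂ)⁻¹) *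
            ∑ t ∈ Finset.range n,
              C (ξ ^ ((t : ℤ) * ((p : ℤ) + (r : ℤ)))) * gornik n r ξ (t : ℤ) :=
  ncomp_inversion_general n r hn ξ hξ p
end

section
/- (Lemma 2.3 of the paper.) Let V ⊆ A be the ℂ-linear span of the images of Gornik's generators g_0, g_1, …, g_{n−1} in the quotient ring A = ℂ[x_1,…,x_r]/(x_1^n − 1, …, x_r^n − 1), and for p = 0,…,n−1 let h_p = (g_0)^(p) be the n-degree-p component of g_0. Then V equals the ℂ-linear span of the images of h_0, h_1, …, h_{n−1} in A. -/
open MvPolynomial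

noncomputable def phi (r : ℕ) (u : ℂ) :
    MvPolynomial (Fin r) ℂ →ₐ[ℂ] MvPolynomial (Fin r) ℂ :=
  aeval (fun k : Fin r => C u * X k)

lemma phi_monomial (r : ℕ) (u : ℂ) (m : Fin r →₀ ℕ) (c : ℂ) :
    phi r u (monomial m c) = monomial m (u ^ (∑ k : Fin r, m k) * c) := by
  rw [phi, aeval_monomial]
  have h1 : (m.prod fun k e => (C u * X k : MvPolynomial (Fin r) ℂ) ^ e)
      = C (u ^ (∑ k : Fin r, m k)) * m.prod fun k e => (X k : MvPolynomial (Fin r) ℂ) ^ e := by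
    have hs : (∑ k : Fin r, m k) = m.sum fun _ e => e :=
      (Finsupp.sum_fintype m (fun _ e => e) (fun _ => rfl)).symm
    simp only [hs, Finsupp.prod, Finsupp.sum, ← Finset.prod_pow_eq_pow_sum, map_prod,
      ← Finset.prod_mul_distrib, mul_pow, C_pow]
  rw [h1, algebraMap_eq, ← mul_assoc, ← C_mul, mul_comm c, ← monomial_eq]

lemma phi_ncomp (n r p : ℕ) (u : ℂ) (hu : u ^ n = 1) (hp : p < n)
    (f : MvPolynomial (Fin r) ℂ) :
    phi r u (ncomp n p f) = C (u ^ p) * ncomp n p f := by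
  rw [ncomp, map_sum, Finset.mul_sum]
  refine Finset.sum_congr rfl fun m hm => ?_
  rw [phi_monomial, C_mul_monomial]
  congr 2
  have hm' : (∑ k : Fin r, m k) % n = p := by
    simpa [Nat.mod_eq_of_lt hp] using (Finset.mem_filter.mp hm).2
  conv_lhs => rw [← Nat.div_add_mod (∑ k : Fin r, m k) n, hm', pow_add, pow_mul, hu,
    one_pow, one_mul]

lemma sum_ncomp (n r : ℕ) (hn : 0 < n) (f : MvPolynomial (Fin r) ℂ) :
    ∑ p ∈ Finset.range n, ncomp n p f = f := by
  conv_rhs => rw [f.as_sum]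
  rw [← Finset.sum_fiberwise_of_maps_to (g := fun m : Fin r →₀ ℕ => (∑ k : Fin r, m k) % n)
    (fun m _ => Finset.mem_range.mpr (Nat.mod_lt _ hn))]
  refine Finset.sum_congr rfl fun p hp => ?_
  rw [ncomp]
  congr 1
  ext m
  simp [Nat.mod_eq_of_lt (Finset.mem_range.mp hp)]

lemma gornik_eq (n r : ℕ) (ξ : ℂ) (hξ : ξ ≠ 0) (t : ℤ) :
    gornik n r ξ t = C ((ξ ^ (-t)) ^ r) * phi r (ξ ^ (-t)) (gornik n r ξ 0) := by
  set u := ξ ^ (-t) with hu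
  rw [gornik, gornik, phi, map_prod]
  rw [show (C (u ^ r) : MvPolynomial (Fin r) ℂ) = ∏ _k : Fin r, C u by
    rw [Finset.prod_const]; simp [C_pow]]
  rw [← Finset.prod_mul_distrib]
  refine Finset.prod_congr rfl fun k _ => ?_
  rw [map_sum, Finset.mul_sum]
  refine Finset.sum_congr rfl fun a _ => ?_
  simp only [zero_mul, neg_zero, zpow_zero, map_one, one_mul, map_mul, aeval_X, map_pow]
  rw [mul_pow, ← C_pow, ← mul_assoc, ← C_mul, ← pow_succ']
  congr 2
  rw [hu, ← zpow_natCast (ξ ^ (-t)), ← zpow_mul]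
  push_cast
  ring_nf


lemma gornik_decomp (n r : ℕ) (hn : 0 < n) (ξ : ℂ) (hξn : ξ ^ n = 1) (hξ0 : ξ ≠ 0) (t : ℤ) :
    gornik n r ξ t =
      ∑ p ∈ Finset.range n, C ((ξ ^ (-t)) ^ (p + r)) * ncomp n p (gornik n r ξ 0) := by
  have hu : (ξ ^ (-t)) ^ n = 1 := by
    rw [← zpow_natCast (ξ ^ (-t)), ← zpow_mul, mul_comm, zpow_mul, zpow_natCast, hξn, one_zpow]
  rw [gornik_eq n r ξ hξ0 t]
  conv_lhs => rw [← sum_ncomp n r hn (gornik n r ξ 0)]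
  rw [map_sum, Finset.mul_sum]
  refine Finset.sum_congr rfl fun p hp => ?_
  rw [phi_ncomp n r p _ hu (Finset.mem_range.mp hp), ← mul_assoc, ← C_mul, ← pow_add,
    add_comm r p]

lemma ortho (n : ℕ) (hn : 0 < n) (ξ : ℂ) (hprim : IsPrimitiveRoot ξ n) (p q : ℕ)
    (hp : p < n) (hq : q < n) :
    ∑ t ∈ Finset.range n, ξ ^ ((t : ℤ) * ((p : ℤ) - q)) = if p = q then (n : ℂ) else 0 := by
  rcases eq_or_ne p q with h | h
  · simp [h]
  · rw [if_neg h]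
    have hd : ¬ ((n : ℤ) ∣ ((p : ℤ) - q)) := by
      intro hdvd
      rcases hdvd with ⟨c, hc⟩
      have hc0 : c = 0 := by nlinarith [hc, hp, hq]
      rw [hc0, mul_zero] at hc
      omega
    have h1 : ξ ^ ((p : ℤ) - q) ≠ 1 := fun he => hd ((hprim.zpow_eq_one_iff_dvd _).mp he)
    have h2 : (ξ ^ ((p : ℤ) - q)) ^ n = 1 := by
      rw [← zpow_natCast (ξ ^ ((p:ℤ) - q)), ← zpow_mul, mul_comm, zpow_mul, zpow_natCast,
        hprim.pow_eq_one, one_zpow]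
    calc ∑ t ∈ Finset.range n, ξ ^ ((t : ℤ) * ((p : ℤ) - q))
        = ∑ t ∈ Finset.range n, (ξ ^ ((p : ℤ) - q)) ^ t := by
          refine Finset.sum_congr rfl fun t _ => ?_
          rw [← zpow_natCast (ξ ^ ((p:ℤ) - q)), ← zpow_mul, mul_comm]
      _ = 0 := by rw [geom_sum_eq h1, h2, sub_self, zero_div]

lemma inv_identity (n r : ℕ) (hn : 0 < n) (ξ : ℂ) (hprim : IsPrimitiveRoot ξ n) (p : ℕ)
    (hp : p < n) :
    ∑ t ∈ Finset.range n, C (ξ ^ ((t : ℤ) * ((p : ℤ) + r))) * gornik n r ξ (t : ℤ)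
      = C (n : ℂ) * ncomp n p (gornik n r ξ 0) := by
  have hξ0 : ξ ≠ 0 := hprim.ne_zero hn.ne'
  have hξn : ξ ^ n = 1 := hprim.pow_eq_one
  calc ∑ t ∈ Finset.range n, C (ξ ^ ((t : ℤ) * ((p : ℤ) + r))) * gornik n r ξ (t : ℤ)
      = ∑ t ∈ Finset.range n, ∑ q ∈ Finset.range n,
          C (ξ ^ ((t : ℤ) * ((p : ℤ) - q))) * ncomp n q (gornik n r ξ 0) := by
        refine Finset.sum_congr rfl fun t _ => ?_
        rw [gornik_decomp n r hn ξ hξn hξ0 (t : ℤ), Finset.mul_sum]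
        refine Finset.sum_congr rfl fun q _ => ?_
        rw [← mul_assoc, ← C_mul]
        congr 2
        rw [← zpow_natCast (ξ ^ (-(t:ℤ))), ← zpow_mul, ← zpow_add₀ hξ0]
        congr 1
        push_cast
        ring
    _ = ∑ q ∈ Finset.range n, C (∑ t ∈ Finset.range n, ξ ^ ((t : ℤ) * ((p : ℤ) - q)))
          * ncomp n q (gornik n r ξ 0) := by
        rw [Finset.sum_comm]
        refine Finset.sum_congr rfl fun q _ => ?_
        rw [map_sum, Finset.sum_mul]
    _ = C (n : ℂ) * ncomp n p (gornik n r ξ 0) := by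
        rw [Finset.sum_congr rfl (fun q hq => by
          rw [ortho n hn ξ hprim p q hp (Finset.mem_range.mp hq), apply_ite C, ite_mul,
            map_zero, zero_mul])]
        rw [Finset.sum_ite_eq, if_pos (Finset.mem_range.mpr hp)]

/-- Lemma 2.3: the span `V` of the images of `g_0, …, g_{n-1}` in the quotient ring
`A = ℂ[x_1,…,x_r]/(x_1^n - 1, …, x_r^n - 1)` equals the span of the images of the
`n`-homogeneous elements `h_0, …, h_{n-1}`, where `h_p = (g_0)^(p)`. -/
theorem span_gornik_eq_span_ncomp (n r : ℕ) (hn : 2 ≤ n) (hr : 1 ≤ r) (ξ : ℂ)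
    (hξ : ξ = Complex.exp (2 * Real.pi * Complex.I / n)) :
    let I : Ideal (MvPolynomial (Fin r) ℂ) :=
      Ideal.span (Set.range fun k : Fin r => X k ^ n - 1)
    Submodule.span ℂ
        (Set.range fun t : Fin n => Ideal.Quotient.mk I (gornik n r ξ ((t : ℕ) : ℤ)))
      = Submodule.span ℂ
        (Set.range fun p : Fin n =>
          Ideal.Quotient.mk I (ncomp n (p : ℕ) (gornik n r ξ 0))) := by
  intro I
  have hn0 : 0 < n := by omega
  have hprim : IsPrimitiveRoot ξ n := hξ ▸ Complex.isPrimitiveRoot_exp n hn0.ne'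
  have hξ0 : ξ ≠ 0 := hprim.ne_zero hn0.ne'
  have hξn : ξ ^ n = 1 := hprim.pow_eq_one
  have hsmul : ∀ (c : ℂ) (f : MvPolynomial (Fin r) ℂ),
      Ideal.Quotient.mk I (C c * f) = c • Ideal.Quotient.mk I f := by
    intro c f
    rw [← MvPolynomial.smul_eq_C_mul, ← Ideal.Quotient.mkₐ_eq_mk ℂ I]
    exact map_smul _ _ _
  apply le_antisymm <;> rw [Submodule.span_le] <;> rintro _ ⟨t, rfl⟩
  · beta_reduce
    rw [gornik_decomp n r hn0 ξ hξn hξ0 ((t : ℕ) : ℤ), map_sum]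
    refine Submodule.sum_mem _ fun p hp => ?_
    rw [hsmul]
    exact Submodule.smul_mem _ _
      (Submodule.subset_span ⟨⟨p, Finset.mem_range.mp hp⟩, rfl⟩)
  · beta_reduce
    have key := inv_identity n r hn0 ξ hprim (t : ℕ) t.isLt
    have hnne : (n : ℂ) ≠ 0 := Nat.cast_ne_zero.mpr hn0.ne'
    have key2 : ∑ s ∈ Finset.range n, ξ ^ ((s : ℤ) * (((t : ℕ) : ℤ) + r))
          • Ideal.Quotient.mk I (gornik n r ξ (s : ℤ))
        = (n : ℂ) • Ideal.Quotient.mk I (ncomp n (t : ℕ) (gornik n r ξ 0)) := by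
      rw [← hsmul, ← key, map_sum]
      exact Finset.sum_congr rfl fun s _ => (hsmul _ _).symm
    have hrw : Ideal.Quotient.mk I (ncomp n (t : ℕ) (gornik n r ξ 0))
        = (n : ℂ)⁻¹ • ∑ s ∈ Finset.range n, ξ ^ ((s : ℤ) * (((t : ℕ) : ℤ) + r))
          • Ideal.Quotient.mk I (gornik n r ξ (s : ℤ)) := by
      rw [key2, smul_smul, inv_mul_cancel₀ hnne, one_smul]
    rw [hrw]
    exact Submodule.smul_mem _ _ (Submodule.sum_mem _ fun s hs => Submodule.smul_mem _ _
      (Submodule.subset_span ⟨⟨s, Finset.mem_range.mp hs⟩, rfl⟩))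
end

section
/- The images of h_0, h_1, …, h_{n−1} in the quotient ring A = ℂ[x_1,…,x_r]/(x_1^n − 1, …, x_r^n − 1) are linearly independent over ℂ; in particular, each h_p has nonzero image in A, and h_0, …, h_{n−1} form a basis of the n-dimensional subspace V spanned by the images of g_0, …, g_{n−1}. -/
open MvPolynomial Finset

namespace GK

variable {n r : ℕ} {ξ : ℂ}

/-- abbreviation for the index set -/
def S (n r : ℕ) : Finset (Fin r → ℕ) := Fintype.piFinset fun _ => Finset.range n

noncomputable def e {r : ℕ} (g : Fin r → ℕ) : Fin r →₀ ℕ := Finsupp.equivFunOnFinite.symm g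

lemma e_apply (g : Fin r → ℕ) (k : Fin r) : e g k = g k := rfl

lemma e_inj : Function.Injective (e (r := r)) := Finsupp.equivFunOnFinite.symm.injective

lemma prod_X_pow_univ (m : Fin r →₀ ℕ) :
    ∏ k : Fin r, (X k : MvPolynomial (Fin r) ℂ) ^ m k = monomial m 1 := by
  rw [← prod_X_pow_eq_monomial]
  exact (Finset.prod_subset (Finset.subset_univ _)
    (by intro x _ hx; simp [Finsupp.notMem_support_iff.mp hx])).symm

lemma zpow_sum₀ {α : Type*} (hξ0 : ξ ≠ 0) (s : Finset α) (f : α → ℤ) :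
    ξ ^ (∑ i ∈ s, f i) = ∏ i ∈ s, ξ ^ f i := by
  induction s using Finset.cons_induction with
  | empty => simp
  | cons a s ha ih => rw [Finset.sum_cons, Finset.prod_cons, zpow_add₀ hξ0, ih]

lemma gornik_eq (hξ0 : ξ ≠ 0) (t : ℤ) :
    gornik n r ξ t = ∑ g ∈ S n r,
      monomial (e g) (ξ ^ (-(t * ((∑ k, g k : ℕ) + (r : ℤ))))) := by
  rw [gornik, Finset.prod_univ_sum]
  refine Finset.sum_congr rfl fun g _ => ?_
  rw [Finset.prod_mul_distrib, ← map_prod]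
  have h1 : ∏ k : Fin r, ξ ^ (-(t * ((g k : ℤ) + 1)))
      = ξ ^ (-(t * ((∑ k, g k : ℕ) + (r : ℤ)))) := by
    rw [← zpow_sum₀ hξ0]
    congr 1
    push_cast
    rw [Finset.sum_neg_distrib, ← Finset.mul_sum, Finset.sum_add_distrib]
    simp [mul_add]
  rw [h1]
  have h2 : ∏ k : Fin r, (X k : MvPolynomial (Fin r) ℂ) ^ g k = monomial (e g) 1 :=
    prod_X_pow_univ (e g)
  rw [h2, C_mul_monomial, mul_one]


lemma mem_S_iff (g : Fin r → ℕ) : g ∈ S n r ↔ ∀ k, g k < n := by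
  simp [S, Fintype.mem_piFinset]

lemma e_coe (g : Fin r → ℕ) : ((e g : Fin r →₀ ℕ) : Fin r → ℕ) = g := rfl

lemma e_coe_fn (m : Fin r →₀ ℕ) : e (⇑m) = m := Finsupp.equivFunOnFinite_symm_coe m

lemma gsum_coeff (m : Fin r →₀ ℕ) :
    coeff m (∑ g ∈ S n r, monomial (e g) (1:ℂ)) = if (⇑m : Fin r → ℕ) ∈ S n r then 1 else 0 := by
  rw [MvPolynomial.coeff_sum]
  have h : ∀ g : Fin r → ℕ, ((e g : Fin r →₀ ℕ) = m) = (g = ⇑m) := fun g =>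
    propext ⟨fun h => by rw [← e_coe (r := r) g, h], fun h => by rw [h, e_coe_fn]⟩
  simp only [coeff_monomial, h]
  exact Finset.sum_ite_eq' _ _ (fun _ => 1)

lemma gsum_support :
    (∑ g ∈ S n r, monomial (e g) (1:ℂ)).support = (S n r).image e := by
  ext m
  rw [MvPolynomial.mem_support_iff, gsum_coeff, Finset.mem_image]
  constructor
  · intro h
    split_ifs at h with hm
    · exact ⟨⇑m, hm, e_coe_fn m⟩
    · simp at h
  · rintro ⟨g, hg, rfl⟩
    rw [if_pos (by rwa [e_coe])]
    exact one_ne_zero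

lemma ncomp_g0 (hξ0 : ξ ≠ 0) (p : ℕ) :
    ncomp n p (gornik n r ξ 0) =
      ∑ g ∈ (S n r).filter (fun g => (∑ k, g k) % n = p % n), monomial (e g) 1 := by
  have hg0 : gornik n r ξ 0 = ∑ g ∈ S n r, monomial (e g) (1:ℂ) := by
    rw [gornik_eq hξ0 0]
    refine Finset.sum_congr rfl fun g _ => ?_
    norm_num
  rw [ncomp, hg0, gsum_support, Finset.filter_image, Finset.sum_image
    (fun a _ b _ h => e_inj h)]
  refine Finset.sum_congr ?_ fun g hg => ?_
  · congr 1
  · rw [gsum_coeff]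
    rw [Finset.mem_filter] at hg
    rw [if_pos (by rw [e_coe]; exact hg.1)]

lemma zpow_congr (hξ0 : ξ ≠ 0) (hξn : ξ ^ n = 1) {a b : ℤ} (h : (n:ℤ) ∣ (a - b)) :
    ξ ^ a = ξ ^ b := by
  obtain ⟨c, hc⟩ := h
  have : a = b + (n:ℤ) * c := by linarith
  rw [this, zpow_add₀ hξ0, zpow_mul, zpow_natCast, hξn, one_zpow, mul_one]

lemma dvd_iff_mod (a p : ℕ) :
    ((n:ℤ) ∣ ((p:ℤ) - (a:ℤ))) ↔ a % n = p % n := by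
  rw [← Int.modEq_iff_dvd]
  unfold Int.ModEq
  rw [← Int.natCast_mod, ← Int.natCast_mod p n, Nat.cast_inj]

lemma gornik_decomp (hξ0 : ξ ≠ 0) (hξn : ξ ^ n = 1) (hn : 0 < n) (t : ℤ) :
    gornik n r ξ t
      = ∑ p ∈ Finset.range n, ξ ^ (-(t * ((p:ℤ) + r))) • ncomp n p (gornik n r ξ 0) := by
  rw [gornik_eq hξ0 t,
    ← Finset.sum_fiberwise_of_maps_to (g := fun g : Fin r → ℕ => (∑ k, g k) % n)
      (t := Finset.range n) (fun g _ => Finset.mem_range.2 (Nat.mod_lt _ hn))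
      (fun g => monomial (e g) (ξ ^ (-(t * ((∑ k, g k : ℕ) + (r : ℤ))))))]
  refine Finset.sum_congr rfl fun p hp => ?_
  have hpn : p % n = p := Nat.mod_eq_of_lt (Finset.mem_range.1 hp)
  rw [ncomp_g0 hξ0, Finset.smul_sum]
  rw [show ((S n r).filter fun g => (∑ k, g k) % n = p % n)
      = ((S n r).filter fun g => (∑ k, g k) % n = p) by rw [hpn]]
  refine Finset.sum_congr rfl fun g hg => ?_
  rw [Finset.mem_filter] at hg
  rw [smul_monomial, smul_eq_mul, mul_one]
  congr 1
  refine zpow_congr hξ0 hξn ?_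
  have hd : (n:ℤ) ∣ ((p:ℤ) - ((∑ k, g k : ℕ) : ℤ)) := (dvd_iff_mod _ _).2 (by rw [hg.2, hpn])
  have : -(t * ((∑ k, g k : ℕ) + (r:ℤ))) - -(t * ((p:ℤ) + r)) = t * ((p:ℤ) - (∑ k, g k : ℕ)) := by
    ring
  rw [this]
  exact Dvd.dvd.mul_left hd t

lemma geo_zpow (hprim : IsPrimitiveRoot ξ n) (hξ0 : ξ ≠ 0) (hn : 0 < n) (d : ℤ) :
    ∑ s ∈ Finset.range n, ξ ^ ((s:ℤ) * d) = if (n:ℤ) ∣ d then (n:ℂ) else 0 := by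
  have hterm : ∀ s : ℕ, ξ ^ ((s:ℤ) * d) = (ξ ^ d) ^ s := fun s => by
    rw [mul_comm, zpow_mul, zpow_natCast]
  simp only [hterm]
  split_ifs with h
  · have h1 : ξ ^ d = 1 := (hprim.zpow_eq_one_iff_dvd d).2 h
    simp [h1]
  · have h1 : ξ ^ d ≠ 1 := fun hc => h ((hprim.zpow_eq_one_iff_dvd d).1 hc)
    rw [geom_sum_eq h1]
    have : (ξ ^ d) ^ n = 1 := by
      rw [← zpow_natCast, ← zpow_mul, mul_comm, zpow_mul, zpow_natCast, hprim.pow_eq_one, one_zpow]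
    rw [this, sub_self, zero_div]

lemma ncomp_fourier (hprim : IsPrimitiveRoot ξ n) (hξ0 : ξ ≠ 0) (hn : 0 < n) (p : ℕ) :
    (n:ℂ) • ncomp n p (gornik n r ξ 0)
      = ∑ t ∈ Finset.range n, ξ ^ ((t:ℤ) * ((p:ℤ) + r)) • gornik n r ξ (t:ℤ) := by
  have hξn : ξ ^ n = 1 := hprim.pow_eq_one
  have step : ∀ t ∈ Finset.range n, ξ ^ ((t:ℤ) * ((p:ℤ) + r)) • gornik n r ξ (t:ℤ)
      = ∑ g ∈ S n r, monomial (e g) (ξ ^ ((t:ℤ) * ((p:ℤ) - (∑ k, g k : ℕ)))) := by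
    intro t _
    rw [gornik_eq hξ0, Finset.smul_sum]
    refine Finset.sum_congr rfl fun g hg => ?_
    rw [smul_monomial, smul_eq_mul, ← zpow_add₀ hξ0]
    congr 1
    ring
  rw [Finset.sum_congr rfl step, Finset.sum_comm]
  have inner : ∀ g ∈ S n r,
      (∑ t ∈ Finset.range n, monomial (e g) (ξ ^ ((t:ℤ) * ((p:ℤ) - (∑ k, g k : ℕ)))))
      = monomial (e g) (if (∑ k, g k) % n = p % n then (n:ℂ) else 0) := by
    intro g _
    rw [← map_sum, geo_zpow hprim hξ0 hn]
    congr 1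
    simp only [dvd_iff_mod]
  rw [Finset.sum_congr rfl inner, ncomp_g0 hξ0, Finset.smul_sum, Finset.sum_filter]
  refine Finset.sum_congr rfl fun g _ => ?_
  split_ifs with h
  · rw [smul_monomial, smul_eq_mul, mul_one]
  · rw [map_zero]

lemma pow_congr (hξn : ξ ^ n = 1) {a b : ℕ} (h : a % n = b % n) : ξ ^ a = ξ ^ b := by
  rw [← Nat.div_add_mod a n, ← Nat.div_add_mod b n, pow_add, pow_add, pow_mul, pow_mul,
    hξn, one_pow, one_pow, h]

lemma geo_pow (hprim : IsPrimitiveRoot ξ n) (m : ℕ) :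
    ∑ s ∈ Finset.range n, ξ ^ (m * s) = if n ∣ m then (n:ℂ) else 0 := by
  simp only [pow_mul]
  split_ifs with h
  · have h1 : ξ ^ m = 1 := (hprim.pow_eq_one_iff_dvd m).2 h
    simp [h1]
  · have h1 : ξ ^ m ≠ 1 := fun hc => h ((hprim.pow_eq_one_iff_dvd m).1 hc)
    rw [geom_sum_eq h1]
    have : (ξ ^ m) ^ n = 1 := by
      rw [← pow_mul, mul_comm, pow_mul, hprim.pow_eq_one, one_pow]
    rw [this, sub_self, zero_div]

noncomputable def N (n r p : ℕ) : ℂ :=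
  (((S n r).filter fun g => (∑ k, g k) % n = p % n).card : ℂ)

lemma N_ne_zero (hn : 0 < n) (hr : 0 < r) (p : ℕ) (hp : p < n) : N n r p ≠ 0 := by
  have : (fun k : Fin r => if k = ⟨0, hr⟩ then p else 0) ∈
      (S n r).filter fun g => (∑ k, g k) % n = p % n := by
    rw [Finset.mem_filter, mem_S_iff]
    constructor
    · intro k; split_ifs <;> omega
    · rw [Finset.sum_ite_eq' Finset.univ (⟨0, hr⟩ : Fin r) (fun _ => p)]
      simp
  rw [N, Nat.cast_ne_zero]
  exact Finset.card_ne_zero_of_mem this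

lemma ev_monomial (s : ℕ) (g : Fin r → ℕ) (c : ℂ) :
    aeval (fun _ : Fin r => ξ ^ s) (monomial (e g) c) = c * ξ ^ (s * ∑ k, g k) := by
  rw [aeval_monomial, Finsupp.prod_pow]
  congr 1
  calc ∏ k : Fin r, (ξ ^ s) ^ (e g) k = ∏ k : Fin r, (ξ ^ s) ^ g k := rfl
    _ = (ξ ^ s) ^ ∑ k, g k := Finset.prod_pow_eq_pow_sum _ _ _
    _ = ξ ^ (s * ∑ k, g k) := (pow_mul ξ s _).symm

lemma ev_ncomp (hξ0 : ξ ≠ 0) (hξn : ξ ^ n = 1) (s p : ℕ) (hp : p < n) :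
    aeval (fun _ : Fin r => ξ ^ s) (ncomp n p (gornik n r ξ 0)) = ξ ^ (s * p) * N n r p := by
  rw [ncomp_g0 hξ0, map_sum]
  have step : ∀ g ∈ (S n r).filter fun g => (∑ k, g k) % n = p % n,
      aeval (fun _ : Fin r => ξ ^ s) (monomial (e g) (1:ℂ)) = ξ ^ (s * p) := by
    intro g hg
    rw [Finset.mem_filter] at hg
    rw [ev_monomial, one_mul]
    exact pow_congr hξn (Nat.ModEq.mul_left s hg.2)
  rw [Finset.sum_congr rfl step, Finset.sum_const, nsmul_eq_mul, mul_comm, N]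

lemma ev_ideal (hξn : ξ ^ n = 1) (s : ℕ) {f : MvPolynomial (Fin r) ℂ}
    (hf : f ∈ Ideal.span (Set.range fun k : Fin r => X k ^ n - 1)) :
    aeval (fun _ : Fin r => ξ ^ s) f = 0 := by
  have hker : Ideal.span (Set.range fun k : Fin r => X k ^ n - 1) ≤
      RingHom.ker ((aeval (fun _ : Fin r => ξ ^ s) : MvPolynomial (Fin r) ℂ →ₐ[ℂ] ℂ) :
        MvPolynomial (Fin r) ℂ →+* ℂ) := by
    rw [Ideal.span_le]
    rintro x ⟨k, rfl⟩
    simp only [SetLike.mem_coe, RingHom.mem_ker, AlgHom.coe_toRingHom, map_sub, map_pow,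
      aeval_X, map_one]
    rw [← pow_mul, mul_comm, pow_mul, hξn, one_pow, sub_self]
  exact hker hf

lemma dvd_iff_eq {p q : ℕ} (hp : p < n) (hq : q < n) : n ∣ (p + (n - q)) ↔ p = q := by
  constructor
  · intro h
    have h1 : p + (n - q) = n := Nat.eq_of_dvd_of_lt_two_mul (by omega) h (by omega)
    omega
  · rintro rfl
    exact ⟨1, by omega⟩

end GK
/-- The images of `h_0, …, h_{n-1}` (`h_p = (g_0)^(p)`) in the quotient ring
`A = ℂ[x_1,…,x_r]/(x_1^n - 1, …, x_r^n - 1)` are linearly independent over `ℂ`;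
in particular each has nonzero image, and together they form a basis of the
`n`-dimensional subspace `V` spanned by the images of `g_0, …, g_{n-1}`. -/
theorem ncomp_linearIndependent (n r : ℕ) (hn : 2 ≤ n) (hr : 1 ≤ r) (ξ : ℂ)
    (hξ : ξ = Complex.exp (2 * Real.pi * Complex.I / n)) :
    let I : Ideal (MvPolynomial (Fin r) ℂ) :=
      Ideal.span (Set.range fun k : Fin r => X k ^ n - 1)
    LinearIndependent ℂ
      (fun p : Fin n => Ideal.Quotient.mk I (ncomp n (p : ℕ) (gornik n r ξ 0))) ∧
    (∀ p : Fin n, Ideal.Quotient.mk I (ncomp n (p : ℕ) (gornik n r ξ 0)) ≠ 0) ∧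
    Submodule.span ℂ
        (Set.range fun p : Fin n =>
          Ideal.Quotient.mk I (ncomp n (p : ℕ) (gornik n r ξ 0)))
      = Submodule.span ℂ
        (Set.range fun t : Fin n => Ideal.Quotient.mk I (gornik n r ξ ((t : ℕ) : ℤ))) ∧
    Module.finrank ℂ
      ↥(Submodule.span ℂ
          (Set.range fun t : Fin n => Ideal.Quotient.mk I (gornik n r ξ ((t : ℕ) : ℤ))))
      = n := by
  intro I
  have hn0 : 0 < n := by omega
  have hprim : IsPrimitiveRoot ξ n := by
    rw [hξ]; exact Complex.isPrimitiveRoot_exp n (by omega)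
  have hξ0 : ξ ≠ 0 := hprim.ne_zero (by omega)
  have hξn : ξ ^ n = 1 := hprim.pow_eq_one
  have hnC : (n : ℂ) ≠ 0 := Nat.cast_ne_zero.2 (by omega)
  have hmk : ∀ (a : ℂ) (f : MvPolynomial (Fin r) ℂ),
      Ideal.Quotient.mk I (a • f) = a • Ideal.Quotient.mk I f := fun a f => by
    rw [← Ideal.Quotient.mkₐ_eq_mk ℂ I]
    exact map_smul (Ideal.Quotient.mkₐ ℂ I) a f
  have hLI : LinearIndependent ℂ
      (fun p : Fin n => Ideal.Quotient.mk I (ncomp n (p : ℕ) (gornik n r ξ 0))) := by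
    rw [Fintype.linearIndependent_iff]
    intro c hc
    have hmem : (∑ p : Fin n, c p • ncomp n (p : ℕ) (gornik n r ξ 0)) ∈ I := by
      rw [← Ideal.Quotient.eq_zero_iff_mem, map_sum,
        Finset.sum_congr rfl fun p _ => hmk (c p) _]
      exact hc
    have hev : ∀ s : ℕ, ∑ p : Fin n, c p * (ξ ^ (s * (p : ℕ)) * GK.N n r (p : ℕ)) = 0 := by
      intro s
      have h0 := GK.ev_ideal hξn s hmem
      rw [map_sum] at h0
      calc ∑ p : Fin n, c p * (ξ ^ (s * (p : ℕ)) * GK.N n r (p : ℕ))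
          = ∑ p : Fin n,
              aeval (fun _ : Fin r => ξ ^ s) (c p • ncomp n (p : ℕ) (gornik n r ξ 0)) := by
            refine Finset.sum_congr rfl fun p _ => ?_
            rw [map_smul, GK.ev_ncomp hξ0 hξn s (p : ℕ) p.isLt, smul_eq_mul]
        _ = 0 := h0
    intro q
    have h2 : ∑ s ∈ Finset.range n, ξ ^ ((n - (q : ℕ)) * s) *
        (∑ p : Fin n, c p * (ξ ^ (s * (p : ℕ)) * GK.N n r (p : ℕ))) = 0 :=
      Finset.sum_eq_zero fun s _ => by rw [hev s, mul_zero]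
    have h3 : ∑ s ∈ Finset.range n, ξ ^ ((n - (q : ℕ)) * s) *
        (∑ p : Fin n, c p * (ξ ^ (s * (p : ℕ)) * GK.N n r (p : ℕ)))
        = (c q * GK.N n r (q : ℕ)) * n := by
      simp only [Finset.mul_sum]
      rw [Finset.sum_comm]
      have inner : ∀ p : Fin n,
          ∑ s ∈ Finset.range n, ξ ^ ((n - (q : ℕ)) * s) *
            (c p * (ξ ^ (s * (p : ℕ)) * GK.N n r (p : ℕ)))
          = if p = q then (c p * GK.N n r (p : ℕ)) * n else 0 := by
        intro p
        have e1 : ∀ s : ℕ, ξ ^ ((n - (q : ℕ)) * s) *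
            (c p * (ξ ^ (s * (p : ℕ)) * GK.N n r (p : ℕ)))
            = (c p * GK.N n r (p : ℕ)) * ξ ^ (((p : ℕ) + (n - (q : ℕ))) * s) := by
          intro s
          rw [show ((p : ℕ) + (n - (q : ℕ))) * s = (n - (q : ℕ)) * s + s * (p : ℕ) by ring,
            pow_add]
          ring
        rw [Finset.sum_congr rfl fun s _ => e1 s, ← Finset.mul_sum, GK.geo_pow hprim]
        rcases eq_or_ne p q with hpq | hpq
        · subst hpq
          rw [if_pos ((GK.dvd_iff_eq p.isLt p.isLt).2 rfl), if_pos rfl]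
        · rw [if_neg (fun hd => hpq (Fin.val_inj.1 ((GK.dvd_iff_eq p.isLt q.isLt).1 hd))),
            if_neg hpq, mul_zero]
      rw [Finset.sum_congr rfl fun p _ => inner p, Finset.sum_ite_eq' Finset.univ q]
      simp
    rw [h3] at h2
    rcases mul_eq_zero.1 h2 with h4 | h4
    · rcases mul_eq_zero.1 h4 with h5 | h5
      · exact h5
      · exact absurd h5 (GK.N_ne_zero hn0 hr (q : ℕ) q.isLt)
    · exact absurd h4 hnC
  have hspan : Submodule.span ℂ
        (Set.range fun p : Fin n =>
          Ideal.Quotient.mk I (ncomp n (p : ℕ) (gornik n r ξ 0)))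
      = Submodule.span ℂ
        (Set.range fun t : Fin n => Ideal.Quotient.mk I (gornik n r ξ ((t : ℕ) : ℤ))) := by
    apply le_antisymm
    · rw [Submodule.span_le]
      rintro _ ⟨p, rfl⟩
      dsimp only
      have hid := GK.ncomp_fourier (n := n) (r := r) hprim hξ0 hn0 (p : ℕ)
      have hq : (n : ℂ) • Ideal.Quotient.mk I (ncomp n (p : ℕ) (gornik n r ξ 0))
          = ∑ t ∈ Finset.range n, ξ ^ ((t : ℤ) * (((p : ℕ) : ℤ) + r)) •
              Ideal.Quotient.mk I (gornik n r ξ (t : ℤ)) := by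
        rw [← hmk, hid, map_sum, Finset.sum_congr rfl fun t _ => hmk _ _]
      have : Ideal.Quotient.mk I (ncomp n (p : ℕ) (gornik n r ξ 0))
          = (n : ℂ)⁻¹ • ((n : ℂ) • Ideal.Quotient.mk I (ncomp n (p : ℕ) (gornik n r ξ 0))) :=
        (inv_smul_smul₀ hnC _).symm
      rw [SetLike.mem_coe, this, hq]
      refine Submodule.smul_mem _ _ (Submodule.sum_mem _ fun t ht => Submodule.smul_mem _ _ ?_)
      exact Submodule.subset_span ⟨⟨t, Finset.mem_range.1 ht⟩, rfl⟩
    · rw [Submodule.span_le]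
      rintro _ ⟨t, rfl⟩
      dsimp only
      have hid := GK.gornik_decomp (n := n) (r := r) hξ0 hξn hn0 ((t : ℕ) : ℤ)
      have hq : Ideal.Quotient.mk I (gornik n r ξ ((t : ℕ) : ℤ))
          = ∑ p ∈ Finset.range n, ξ ^ (-(((t : ℕ) : ℤ) * ((p : ℤ) + r))) •
              Ideal.Quotient.mk I (ncomp n p (gornik n r ξ 0)) := by
        rw [hid, map_sum, Finset.sum_congr rfl fun p _ => hmk _ _]
      rw [SetLike.mem_coe, hq]
      refine Submodule.sum_mem _ fun p hp => Submodule.smul_mem _ _ ?_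
      exact Submodule.subset_span ⟨⟨p, Finset.mem_range.1 hp⟩, rfl⟩
  refine ⟨hLI, fun p => hLI.ne_zero p, hspan, ?_⟩
  rw [← hspan, finrank_span_eq_card hLI, Fintype.card_fin]
end

section
/- Let n ≥ 1 and c be integers, and let j : {0,1,…,n−1} → ℤ be a function such that j(p) ≡ 2p + c (mod 2n) for every p, and such that |j(p) − j(q)| ≤ 2(n−1) for all p, q. Then j is injective and there exists an integer s with s ≡ c + n − 1 (mod 2) such that the image of j is exactly the set {s − n + 1, s − n + 3, …, s + n − 3, s + n − 1} of n integers in arithmetic progression with common difference 2. Consequently Σ_{p=0}^{n−1} q^{j(p)} = q^s · (q^n − q^{−n})/(q − q^{−1}) as Laurent polynomials in q. -/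
open LaurentPolynomial

/-- Combinatorial core of Theorem 1.3: if `j : {0,…,n-1} → ℤ` satisfies
`j(p) ≡ 2p + c (mod 2n)` and `|j(p) - j(q)| ≤ 2(n-1)` for all `p, q`, then `j` is
injective and its image is `{s - n + 1, s - n + 3, …, s + n - 1}` for some integer `s`
with `s ≡ c + n - 1 (mod 2)`; hence `∑_p q^{j(p)} = q^s (q^n - q^{-n})/(q - q^{-1})`
as Laurent polynomials (the right-hand side being `q^s ∑_{i=0}^{n-1} q^{n-1-2i}`). -/
theorem gradings_form_quantum_integer (n : ℕ) (hn : 1 ≤ n) (c : ℤ) (j : Fin n → ℤ)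
    (hcong : ∀ p : Fin n, ((2 * n : ℕ) : ℤ) ∣ j p - (2 * (p : ℕ) + c))
    (hspread : ∀ p q : Fin n, |j p - j q| ≤ 2 * ((n : ℤ) - 1)) :
    Function.Injective j ∧
    ∃ s : ℤ, (2 ∣ s - (c + (n : ℤ) - 1)) ∧
      Set.range j = {x : ℤ | ∃ i < n, x = s - (n : ℤ) + 1 + 2 * (i : ℤ)} ∧
      ∑ p : Fin n, (T (j p) : LaurentPolynomial ℂ)
        = T s * ∑ i ∈ Finset.range n, T ((n : ℤ) - 1 - 2 * (i : ℤ)) := by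
  haveI : NeZero n := ⟨by omega⟩
  have hne : (Finset.univ : Finset (Fin n)).Nonempty := Finset.univ_nonempty
  set m : ℤ := Finset.univ.inf' hne j with hm
  have hmin : ∀ p, m ≤ j p := fun p => Finset.inf'_le _ (Finset.mem_univ p)
  obtain ⟨p₀, -, hp₀⟩ := Finset.exists_mem_eq_inf' hne j
  -- key divisibility between two indices
  have hdiff : ∀ p q : Fin n, ((2 * n : ℕ) : ℤ) ∣ (j p - j q - 2 * ((p : ℕ) - (q : ℕ) : ℤ)) := by
    intro p q
    have h1 := hcong p
    have h2 := hcong q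
    have : j p - j q - 2 * ((p : ℕ) - (q : ℕ) : ℤ)
        = (j p - (2 * (p : ℕ) + c)) - (j q - (2 * (q : ℕ) + c)) := by ring
    rw [this]
    exact dvd_sub h1 h2
  -- injectivity
  have hinj : Function.Injective j := by
    intro p q hpq
    have hd := hdiff p q
    rw [hpq] at hd
    have hd' : ((2 * n : ℕ) : ℤ) ∣ 2 * ((p : ℕ) - (q : ℕ) : ℤ) := by
      have := (dvd_neg).mpr hd
      simpa using this
    have hn' : (n : ℤ) ∣ ((p : ℕ) - (q : ℕ) : ℤ) := by
      rcases hd' with ⟨t, ht⟩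
      exact ⟨t, by push_cast at ht ⊢; linarith⟩
    have habs : |((p : ℕ) - (q : ℕ) : ℤ)| < (n : ℤ) := by
      have hp := p.isLt
      have hq := q.isLt
      rw [abs_lt]
      omega
    have := Int.eq_zero_of_abs_lt_dvd hn' habs
    exact Fin.ext (by omega)
  -- each j p = m + 2 i with i < n
  have hk : ∀ p : Fin n, ∃ i : ℕ, i < n ∧ j p = m + 2 * (i : ℤ) := by
    intro p
    have heven : (2 : ℤ) ∣ j p - m := by
      have hd := hdiff p p₀
      have hmp : m = j p₀ := hp₀
      rw [← hmp] at hd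
      rcases hd with ⟨t, ht⟩
      exact ⟨(n : ℤ) * t + ((p : ℕ) - (p₀ : ℕ) : ℤ), by push_cast at ht ⊢; linarith⟩
    have hub : j p - m ≤ 2 * ((n : ℤ) - 1) := by
      have h := (abs_le.mp (hspread p p₀)).2
      have hmp : m = j p₀ := hp₀
      linarith
    have hlb : 0 ≤ j p - m := by linarith [hmin p]
    rcases heven with ⟨t, ht⟩
    refine ⟨t.toNat, by omega, by omega⟩
  -- the bijection
  set g : Fin n → Fin n := fun p => ⟨(hk p).choose, (hk p).choose_spec.1⟩ with hgdef
  have hg : ∀ p, j p = m + 2 * ((g p : ℕ) : ℤ) := fun p => (hk p).choose_spec.2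
  have hginj : Function.Injective g := by
    intro p q hpq
    apply hinj
    rw [hg p, hg q, hpq]
  have hgbij : Function.Bijective g := (Finite.injective_iff_bijective).mp hginj
  refine ⟨hinj, m + (n : ℤ) - 1, ?_, ?_, ?_⟩
  · -- parity
    have h2 : (2 : ℤ) ∣ j p₀ - (2 * (p₀ : ℕ) + c) := dvd_trans ⟨(n : ℤ), by push_cast; ring⟩ (hcong p₀)
    rw [show m = j p₀ from hp₀]
    omega
  · -- range
    ext x
    simp only [Set.mem_range, Set.mem_setOf_eq]
    constructor
    · rintro ⟨p, rfl⟩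
      exact ⟨g p, (g p).isLt, by rw [hg p]; ring⟩
    · rintro ⟨i, hi, rfl⟩
      obtain ⟨p, hp⟩ := hgbij.surjective ⟨i, hi⟩
      refine ⟨p, ?_⟩
      rw [hg p, hp]
      norm_num
      ring
  · -- the Laurent polynomial identity
    have hL : ∑ p : Fin n, (T (j p) : LaurentPolynomial ℂ)
        = ∑ i : Fin n, (T (m + 2 * ((i : ℕ) : ℤ)) : LaurentPolynomial ℂ) := by
      refine Fintype.sum_bijective g hgbij _ _ ?_
      intro p
      exact congrArg T (hg p)
    rw [hL, Fin.sum_univ_eq_sum_range (fun i => (T (m + 2 * ((i : ℕ) : ℤ)) : LaurentPolynomial ℂ))]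
    rw [Finset.mul_sum]
    rw [← Finset.sum_range_reflect (fun i => (T (m + 2 * ((i : ℕ) : ℤ)) : LaurentPolynomial ℂ)) n]
    refine Finset.sum_congr rfl ?_
    intro i hi
    rw [Finset.mem_range] at hi
    rw [← T_add]
    congr 1
    have : ((n - 1 - i : ℕ) : ℤ) = (n : ℤ) - 1 - (i : ℤ) := by omega
    rw [this]
    ring
end
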